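/- For every loopless matroid M on a finite ground set, the constant term of its Kazhdan–Lusztig polynomial P_M(t) is equal to 1. -/

import Mathlib

open scoped Classical

/-- A matroid on a finite ground set, presented by its rank function
(normalized, monotone, submodular, with unit increase). -/
structure FinMatroid where
  E : Type
  fintypeE : Fintype E
  deceqE : DecidableEq E
  rk : Finset E → ℕ
  rk_empty : rk ∅ = 0
  rk_mono : ∀ ⦃S T : Finset E⦄, S ⊆ T → rk S ≤ rk T
  rk_submod : ∀ S T : Finset E, rk (S ∪ T) + rk (S ∩ T) ≤ rk S + rk T
  rk_insert_le : ∀ (S : Finset E) (x : E), rk (insert x S) ≤ rk S + 1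

attribute [instance] FinMatroid.fintypeE FinMatroid.deceqE

namespace FinMatroid

/-- The rank of the matroid: the rank of the full ground set. -/
noncomputable def rank (M : FinMatroid) : ℕ := M.rk Finset.univ

/-- A flat: a set such that adding any new element increases the rank. -/
def IsFlat (M : FinMatroid) (F : Finset M.E) : Prop :=
  ∀ x ∉ F, M.rk (insert x F) ≠ M.rk F

/-- The (finite) collection of flats of `M`. -/
noncomputable def flats (M : FinMatroid) : Finset (Finset M.E) :=
  Finset.univ.filter M.IsFlat

/-- A matroid is loopless if every singleton has rank 1. -/
def Loopless (M : FinMatroid) : Prop := ∀ x : M.E, M.rk {x} = 1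

/-- The Möbius function of the lattice of flats of `M` (extended by the usual
recursion; `mu A B = 0` unless `A ⊆ B`). -/
noncomputable def mu (M : FinMatroid) (A B : Finset M.E) : ℤ :=
  if A = B then 1
  else -∑ G ∈ (M.flats.filter (fun G => A ⊆ G ∧ G ⊂ B)).attach,
        M.mu A G.1
termination_by B.card
decreasing_by
  exact Finset.card_lt_card (Finset.mem_filter.mp G.2).2.2

/-- The characteristic polynomial `χ_M(t) = ∑_{F flat} μ(∅,F) t^(rk M - rk F)`. -/
noncomputable def charPoly (M : FinMatroid) : Polynomial ℤ :=
  ∑ F ∈ M.flats, Polynomial.C (M.mu ∅ F) * Polynomial.X ^ (M.rank - M.rk F)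

/-- The localization `M_F`: the restriction of `M` to the set `F`. -/
noncomputable def localization (M : FinMatroid) (F : Finset M.E) : FinMatroid where
  E := {x : M.E // x ∈ F}
  fintypeE := inferInstance
  deceqE := inferInstance
  rk S := M.rk (S.map (Function.Embedding.subtype _))
  rk_empty := by simpa using M.rk_empty
  rk_mono := fun S T h => M.rk_mono (Finset.map_subset_map.mpr h)
  rk_submod := fun S T => by
    try dsimp only
    rw [Finset.map_union, Finset.map_inter]
    exact M.rk_submod _ _
  rk_insert_le := fun S x => by
    try dsimp only
    rw [Finset.map_insert]
    exact M.rk_insert_le _ _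

/-- The restriction `M^F` (the contraction of `M` by the flat `F`), a matroid on
the complement of `F`. -/
noncomputable def restrictionAt (M : FinMatroid) (F : Finset M.E) : FinMatroid where
  E := {x : M.E // x ∉ F}
  fintypeE := inferInstance
  deceqE := inferInstance
  rk S := M.rk (S.map (Function.Embedding.subtype _) ∪ F) - M.rk F
  rk_empty := by simp
  rk_mono := fun S T h =>
    Nat.sub_le_sub_right
      (M.rk_mono (Finset.union_subset_union_left (Finset.map_subset_map.mpr h))) _
  rk_submod := fun S T => by
    try dsimp only
    set e := Function.Embedding.subtype (fun x : M.E => x ∉ F) with he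
    have h1 : (S ∪ T).map e ∪ F = (S.map e ∪ F) ∪ (T.map e ∪ F) := by
      rw [Finset.map_union, Finset.union_union_distrib_right]
    have h2 : (S ∩ T).map e ∪ F = (S.map e ∪ F) ∩ (T.map e ∪ F) := by
      rw [Finset.map_inter, Finset.inter_union_distrib_right]
    have h3 := M.rk_submod (S.map e ∪ F) (T.map e ∪ F)
    have h4 : M.rk F ≤ M.rk (S.map e ∪ F) := M.rk_mono Finset.subset_union_right
    have h5 : M.rk F ≤ M.rk (T.map e ∪ F) := M.rk_mono Finset.subset_union_right
    have h6 : M.rk F ≤ M.rk ((S ∩ T).map e ∪ F) := M.rk_mono Finset.subset_union_right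
    have h7 : M.rk F ≤ M.rk ((S ∪ T).map e ∪ F) := M.rk_mono Finset.subset_union_right
    rw [h1] at h7 ⊢
    rw [h2] at h6 ⊢
    omega
  rk_insert_le := fun S x => by
    try dsimp only
    set e := Function.Embedding.subtype (fun x : M.E => x ∉ F) with he
    have h1 : (insert x S).map e ∪ F = insert (e x) (S.map e ∪ F) := by
      rw [Finset.map_insert, Finset.insert_union]
    have h2 := M.rk_insert_le (S.map e ∪ F) (e x)
    have h3 : M.rk F ≤ M.rk (S.map e ∪ F) := M.rk_mono Finset.subset_union_right
    rw [h1]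
    omega

end FinMatroid

namespace FinMatroid

/-- `P` is a Kazhdan–Lusztig family: it assigns to each loopless matroid a polynomial
satisfying the three defining conditions of the Kazhdan–Lusztig polynomial.
Condition (2), `deg P_M < rk M / 2`, is expressed by the vanishing of all coefficients
in degrees `i` with `2 i ≥ rk M`; condition (3), the Laurent-polynomial identity
`t^(rk M) P_M(t⁻¹) = ∑_F χ_{M_F}(t) P_{M^F}(t)`, is expressed via evaluation at every
nonzero rational number. -/
def IsKLFamily (P : FinMatroid → Polynomial ℤ) : Prop :=
  (∀ M : FinMatroid, M.Loopless → M.rank = 0 → P M = 1) ∧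
  (∀ M : FinMatroid, M.Loopless → 0 < M.rank →
      ∀ i : ℕ, M.rank ≤ 2 * i → (P M).coeff i = 0) ∧
  (∀ M : FinMatroid, M.Loopless → ∀ q : ℚ, q ≠ 0 →
      q ^ M.rank * Polynomial.aeval q⁻¹ (P M) =
        ∑ F ∈ M.flats,
          Polynomial.aeval q ((M.localization F).charPoly) *
            Polynomial.aeval q (P (M.restrictionAt F)))

end FinMatroid


section Aux

open Polynomial

namespace FinMatroid

theorem mu_self (M : FinMatroid) (A : Finset M.E) : M.mu A A = 1 := by
  rw [mu]; simp

theorem rk_le_rank (M : FinMatroid) (F : Finset M.E) : M.rk F ≤ M.rank :=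
  M.rk_mono (Finset.subset_univ F)

theorem rank_localization (M : FinMatroid) (F : Finset M.E) :
    (M.localization F).rank = M.rk F := by
  show M.rk ((Finset.univ : Finset {a : M.E // a ∈ F}).map (Function.Embedding.subtype _)) = M.rk F
  rw [Finset.univ_map_subtype]
  congr 1
  ext a; simp

theorem rank_restrictionAt (M : FinMatroid) (F : Finset M.E) :
    (M.restrictionAt F).rank = M.rank - M.rk F := by
  show M.rk ((Finset.univ : Finset {a : M.E // a ∉ F}).map (Function.Embedding.subtype _) ∪ F) - M.rk F = M.rank - M.rk F
  rw [Finset.univ_map_subtype]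
  congr 2
  ext a; by_cases h : a ∈ F <;> simp [h]

theorem loopless_localization (M : FinMatroid) (F : Finset M.E) (hM : M.Loopless) :
    (M.localization F).Loopless := fun x => by
  show M.rk (({(⟨x.1, x.2⟩ : {a : M.E // a ∈ F})} : Finset {a : M.E // a ∈ F}).map (Function.Embedding.subtype _)) = 1
  rw [Finset.map_singleton]
  exact hM x.1

theorem loopless_restrictionAt (M : FinMatroid) (F : Finset M.E) (hF : M.IsFlat F) :
    (M.restrictionAt F).Loopless := fun x => by
  show M.rk (({(⟨x.1, x.2⟩ : {a : M.E // a ∉ F})} : Finset {a : M.E // a ∉ F}).map (Function.Embedding.subtype fun a => a ∉ F) ∪ F) - M.rk F = 1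
  have h4 : ({(⟨x.1, x.2⟩ : {a : M.E // a ∉ F})} : Finset {a : M.E // a ∉ F}).map (Function.Embedding.subtype fun a => a ∉ F) ∪ F
      = insert x.1 F := by
    ext a
    simp [Finset.mem_insert]
  rw [h4]
  have hx : x.1 ∉ F := x.2
  have h1 := hF x.1 hx
  have h2 := M.rk_insert_le F x.1
  have h3 := M.rk_mono (Finset.subset_insert x.1 F)
  omega

theorem univ_mem_flats (M : FinMatroid) : Finset.univ ∈ M.flats :=
  Finset.mem_filter.mpr ⟨Finset.mem_univ _, fun x hx => absurd (Finset.mem_univ x) hx⟩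

theorem eq_univ_of_rank_flat (M : FinMatroid) {F : Finset M.E} (hF : M.IsFlat F)
    (h : M.rk F = M.rank) : F = Finset.univ := by
  by_contra hne
  obtain ⟨x, hx⟩ : ∃ x, x ∉ F := by
    by_contra h'
    push_neg at h'
    exact hne (Finset.eq_univ_iff_forall.mpr h')
  have h1 := hF x hx
  have h2 := M.rk_mono (Finset.subset_insert x F)
  have h3 : M.rk (insert x F) ≤ M.rank := rk_le_rank M _
  omega

theorem rk_pos_of_ne_empty (M : FinMatroid) (hM : M.Loopless) {F : Finset M.E}
    (h : F ≠ ∅) : 1 ≤ M.rk F := by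
  obtain ⟨x, hx⟩ := Finset.nonempty_iff_ne_empty.mpr h
  calc 1 = M.rk {x} := (hM x).symm
    _ ≤ M.rk F := M.rk_mono (Finset.singleton_subset_iff.mpr hx)

theorem empty_mem_flats (M : FinMatroid) (hM : M.Loopless) : ∅ ∈ M.flats := by
  refine Finset.mem_filter.mpr ⟨Finset.mem_univ _, fun x _ h => ?_⟩
  have he : insert x (∅ : Finset M.E) = {x} := by simp
  rw [he, hM x, M.rk_empty] at h
  exact one_ne_zero h

theorem natDegree_charPoly_le (M : FinMatroid) : M.charPoly.natDegree ≤ M.rank := by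
  refine Polynomial.natDegree_sum_le_of_forall_le _ _ fun F _ => ?_
  refine le_trans (Polynomial.natDegree_C_mul_le _ _) ?_
  simpa using Nat.sub_le _ _

theorem coeff_charPoly_rank (M : FinMatroid) (hM : M.Loopless) :
    M.charPoly.coeff M.rank = 1 := by
  rw [charPoly, Polynomial.finset_sum_coeff,
    Finset.sum_eq_single_of_mem ∅ (M.empty_mem_flats hM)]
  · simp [Polynomial.coeff_C_mul, Polynomial.coeff_X_pow, mu_self, M.rk_empty]
  · intro F _ hne
    have h1 : 1 ≤ M.rk F := rk_pos_of_ne_empty M hM hne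
    have h2 : M.rk F ≤ M.rank := rk_le_rank M F
    rw [Polynomial.coeff_C_mul, Polynomial.coeff_X_pow, if_neg (by omega), mul_zero]

theorem natDegree_P_lt (P : FinMatroid → Polynomial ℤ)
    (h2 : ∀ M : FinMatroid, M.Loopless → 0 < M.rank →
      ∀ i : ℕ, M.rank ≤ 2 * i → (P M).coeff i = 0)
    (N : FinMatroid) (hN : N.Loopless) (hr : 0 < N.rank) :
    (P N).natDegree < N.rank := by
  have h : (P N).natDegree ≤ N.rank - 1 :=
    Polynomial.natDegree_le_iff_coeff_eq_zero.mpr fun k hk => h2 N hN hr k (by omega)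
  omega

theorem eval_reflect_aux (q : ℚ) (hq : q ≠ 0) (f : Polynomial ℚ) (N : ℕ)
    (hf : f.natDegree ≤ N) :
    Polynomial.eval q (Polynomial.reflect N f) = q ^ N * Polynomial.eval q⁻¹ f := by
  have : Invertible q⁻¹ := invertibleOfNonzero (inv_ne_zero hq)
  have h := Polynomial.eval₂_reflect_mul_pow (RingHom.id ℚ) q⁻¹ N f hf
  rw [invOf_eq_inv, inv_inv] at h
  change Polynomial.eval q (Polynomial.reflect N f) * q⁻¹ ^ N = Polynomial.eval q⁻¹ f at h
  have hqN : (q : ℚ) ^ N ≠ 0 := pow_ne_zero _ hq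
  rw [← h, ← mul_assoc, mul_comm (q ^ N), mul_assoc, ← mul_pow, mul_inv_cancel₀ hq, one_pow,
    mul_one]

end FinMatroid

end Aux

/-- The constant term of the Kazhdan–Lusztig polynomial of any loopless
matroid equals `1`. -/
theorem kl_constant_term (P : FinMatroid → Polynomial ℤ) (hP : FinMatroid.IsKLFamily P)
    (M : FinMatroid) (hM : M.Loopless) :
    (P M).coeff 0 = 1 := by
  classical
  obtain ⟨h0, h2, h3⟩ := hP
  by_cases hr : M.rank = 0
  · rw [h0 M hM hr]; simp
  have hrpos : 0 < M.rank := Nat.pos_of_ne_zero hr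
  set N := M.rank with hN
  have hPdeg : (P M).natDegree ≤ N := le_of_lt (FinMatroid.natDegree_P_lt P h2 M hM hrpos)
  set φ := algebraMap ℤ ℚ with hφ
  set A : Polynomial ℚ := Polynomial.reflect N ((P M).map φ) with hA
  set B : Polynomial ℚ := ∑ F ∈ M.flats,
      ((M.localization F).charPoly.map φ) * ((P (M.restrictionAt F)).map φ) with hB
  have hAB : A = B := by
    apply Polynomial.eq_of_infinite_eval_eq
    have hsub : {q : ℚ | q ≠ 0} ⊆ {q : ℚ | Polynomial.eval q A = Polynomial.eval q B} := by
      intro q hq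
      have hq : q ≠ 0 := hq
      have hdegmap : ((P M).map φ).natDegree ≤ N :=
        le_trans Polynomial.natDegree_map_le hPdeg
      show Polynomial.eval q A = Polynomial.eval q B
      rw [hA, FinMatroid.eval_reflect_aux q hq _ N hdegmap, hB,
        Polynomial.eval_finset_sum]
      have h := h3 M hM q hq
      simpa only [Polynomial.aeval_def, Polynomial.eval₂_eq_eval_map,
        Polynomial.eval_mul] using h
    have hinf : ({q : ℚ | q ≠ 0}).Infinite := by
      have : ({q : ℚ | q ≠ 0}) = ({(0 : ℚ)} : Set ℚ)ᶜ := by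
        ext x; simp
      rw [this]
      exact (Set.finite_singleton (0 : ℚ)).infinite_compl
    exact hinf.mono hsub
  have hAc : A.coeff N = ((P M).coeff 0 : ℚ) := by
    rw [hA, Polynomial.coeff_reflect, Polynomial.revAt_le (le_refl N), Nat.sub_self,
      Polynomial.coeff_map]
    rfl
  have hBc : B.coeff N = 1 := by
    rw [hB, Polynomial.finset_sum_coeff,
      Finset.sum_eq_single_of_mem Finset.univ (FinMatroid.univ_mem_flats M)]
    · have hLrank : (M.localization Finset.univ).rank = N := by
        rw [FinMatroid.rank_localization]; exact hN.symm
      have hRrank : (M.restrictionAt Finset.univ).rank = 0 := by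
        rw [FinMatroid.rank_restrictionAt]; exact Nat.sub_self M.rank
      have hRloop : (M.restrictionAt Finset.univ).Loopless :=
        fun x => absurd (Finset.mem_univ x.1) x.2
      rw [h0 _ hRloop hRrank, Polynomial.map_one, mul_one, Polynomial.coeff_map, ← hLrank,
        FinMatroid.coeff_charPoly_rank _ (FinMatroid.loopless_localization M _ hM)]
      rfl
    · intro F hF hne
      apply Polynomial.coeff_eq_zero_of_natDegree_lt
      have hFflat : M.IsFlat F := (Finset.mem_filter.mp hF).2
      have hrkF : M.rk F < N :=
        lt_of_le_of_ne (FinMatroid.rk_le_rank M F)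
          (fun h => hne (FinMatroid.eq_univ_of_rank_flat M hFflat h))
      have hres_rank : (M.restrictionAt F).rank = N - M.rk F :=
        FinMatroid.rank_restrictionAt M F
      have hres_pos : 0 < (M.restrictionAt F).rank := by omega
      have hPd : (P (M.restrictionAt F)).natDegree < (M.restrictionAt F).rank :=
        FinMatroid.natDegree_P_lt P h2 _ (FinMatroid.loopless_restrictionAt M F hFflat)
          hres_pos
      have hχ : ((M.localization F).charPoly.map φ).natDegree ≤ M.rk F := by
        refine le_trans Polynomial.natDegree_map_le ?_
        rw [← FinMatroid.rank_localization M F]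
        exact FinMatroid.natDegree_charPoly_le _
      have hPm : ((P (M.restrictionAt F)).map φ).natDegree < N - M.rk F := by
        refine lt_of_le_of_lt Polynomial.natDegree_map_le ?_
        omega
      calc (((M.localization F).charPoly.map φ) *
            ((P (M.restrictionAt F)).map φ)).natDegree
          ≤ ((M.localization F).charPoly.map φ).natDegree +
            ((P (M.restrictionAt F)).map φ).natDegree := Polynomial.natDegree_mul_le
        _ < N := by omega
  have hfinal : ((P M).coeff 0 : ℚ) = 1 := by rw [← hAc, hAB, hBc]
  exact_mod_cast hfinal
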